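/- arXiv:2310.19302 — 4 statements merged into one kernel-verified Lean document; each statement's English description precedes it below -/
import Mathlib

section
/- Let f be the auxiliary function defined by f(0)=0, f'(r) = (1/2)∫_r^∞ s·exp(−(1/2)∫_r^s τκ(τ)dτ) ds, with κ increasing, κ_∞ := lim_{r→∞}κ(r) ∈ (0,∞), and rκ(r)→0 as r→0⁺. Then f is strictly increasing, f'' ≤ 0, and for all r > 0, 1/κ_∞ ≤ f(r)/r ≤ f'(0). -/
open MeasureTheory Real Filter

/-- The function giving `f'` by the integral formula. -/
noncomputable def Gfun (κ : ℝ → ℝ) (r : ℝ) : ℝ :=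
  (1/2) * ∫ s in Set.Ioi r, s * Real.exp (-(1/2) * ∫ τ in r..s, τ * κ τ)

section aux

variable {κ : ℝ → ℝ} {κinf : ℝ}

lemma kle (hκmono : MonotoneOn κ (Set.Ioi 0))
    (hκlim : Tendsto κ atTop (nhds κinf)) :
    ∀ t : ℝ, 0 < t → κ t ≤ κinf := by
  intro t ht
  apply ge_of_tendsto hκlim
  filter_upwards [Filter.eventually_ge_atTop t] with s hs
  exact hκmono ht (lt_of_lt_of_le ht hs) hs

lemma intint (hκmono : MonotoneOn κ (Set.Ioi 0))
    (hκ0 : Tendsto (fun r => r * κ r) (nhdsWithin 0 (Set.Ioi 0)) (nhds 0)) :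
    ∀ a b : ℝ, 0 ≤ a → a ≤ b → IntervalIntegrable (fun τ => τ * κ τ) volume a b := by
  intro a b ha hab
  rw [intervalIntegrable_iff_integrableOn_Ioc_of_le hab]
  obtain ⟨δ, hδ, hδ1⟩ : ∃ δ > 0, ∀ τ : ℝ, 0 < τ → τ < δ → |τ * κ τ| ≤ 1 := by
    rw [Metric.tendsto_nhdsWithin_nhds] at hκ0
    obtain ⟨δ, hδ, h⟩ := hκ0 1 one_pos
    refine ⟨δ, hδ, fun τ h1 h2 => ?_⟩
    have h3 : dist τ 0 < δ := by rw [Real.dist_eq, sub_zero, abs_of_pos h1]; exact h2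
    have := h (Set.mem_Ioi.mpr h1) h3
    rw [Real.dist_eq, sub_zero] at this
    exact this.le
  have hsub : Set.Ioc a b ⊆ Set.Ioi 0 := fun x hx => lt_of_le_of_lt ha hx.1
  have hmeas : AEStronglyMeasurable (fun τ => τ * κ τ) (volume.restrict (Set.Ioc a b)) := by
    have hk : AEMeasurable κ (volume.restrict (Set.Ioc a b)) :=
      aemeasurable_restrict_of_monotoneOn measurableSet_Ioc (hκmono.mono hsub)
    exact (measurable_id.aemeasurable.mul hk).aestronglyMeasurable
  set d : ℝ := min (δ/2) b with hd
  set C : ℝ := max 1 (b * max |κ d| |κ b|) with hC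
  refine ⟨hmeas, HasFiniteIntegral.restrict_of_bounded (C := C) measure_Ioc_lt_top ?_⟩
  refine (ae_restrict_iff' measurableSet_Ioc).mpr (ae_of_all _ fun τ hτ => ?_)
  have hτ0 : 0 < τ := hsub hτ
  rw [Real.norm_eq_abs]
  rcases lt_or_ge τ δ with h|h
  · exact le_trans (hδ1 τ hτ0 h) (le_max_left _ _)
  · have hτb : τ ≤ b := hτ.2
    have hδb : δ/2 ≤ b := by linarith
    have hd2 : d = δ/2 := min_eq_left hδb
    have hd0 : (0:ℝ) < d := by rw [hd2]; linarith
    have hdτ : d ≤ τ := by rw [hd2]; linarith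
    have h1 : κ d ≤ κ τ := hκmono hd0 hτ0 hdτ
    have h2 : κ τ ≤ κ b := hκmono hτ0 (lt_of_lt_of_le hτ0 hτb) hτb
    have habs : |κ τ| ≤ max |κ d| |κ b| := abs_le_max_abs_abs h1 h2
    calc |τ * κ τ| = |τ| * |κ τ| := abs_mul _ _
      _ ≤ b * max |κ d| |κ b| := by
          apply mul_le_mul _ habs (abs_nonneg _) (by linarith)
          rw [abs_of_pos hτ0]; exact hτb
      _ ≤ C := le_max_right _ _

lemma expo_le (hκmono : MonotoneOn κ (Set.Ioi 0))
    (hκlim : Tendsto κ atTop (nhds κinf))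
    (hκ0 : Tendsto (fun r => r * κ r) (nhdsWithin 0 (Set.Ioi 0)) (nhds 0))
    {r s : ℝ} (hr : 0 ≤ r) (hrs : r ≤ s) :
    ∫ τ in r..s, τ * κ τ ≤ κinf * (s^2 - r^2) / 2 := by
  have h1 : ∫ τ in r..s, τ * κinf = κinf * (s^2 - r^2) / 2 := by
    rw [intervalIntegral.integral_mul_const, integral_id]; ring
  rw [← h1]
  apply intervalIntegral.integral_mono_on hrs (intint hκmono hκ0 r s hr hrs)
    ((continuous_id.mul continuous_const).intervalIntegrable _ _)
  intro τ hτ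
  have hτ0 : 0 ≤ τ := le_trans hr hτ.1
  rcases eq_or_lt_of_le hτ0 with h|h
  · simp [← h]
  · exact mul_le_mul_of_nonneg_left (kle hκmono hκlim τ h) hτ0

lemma expo_ge (hκmono : MonotoneOn κ (Set.Ioi 0))
    (hκ0 : Tendsto (fun r => r * κ r) (nhdsWithin 0 (Set.Ioi 0)) (nhds 0))
    {t s : ℝ} (ht : 0 < t) (hts : t ≤ s) :
    κ t * (s^2 - t^2) / 2 ≤ ∫ τ in t..s, τ * κ τ := by
  have h1 : ∫ τ in t..s, τ * κ t = κ t * (s^2 - t^2) / 2 := by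
    rw [intervalIntegral.integral_mul_const, integral_id]; ring
  rw [← h1]
  apply intervalIntegral.integral_mono_on hts
    ((continuous_id.mul continuous_const).intervalIntegrable _ _)
    (intint hκmono hκ0 t s ht.le hts)
  intro τ hτ
  have hτ0 : 0 < τ := lt_of_lt_of_le ht hτ.1
  exact mul_le_mul_of_nonneg_left (hκmono (Set.mem_Ioi.mpr ht) (Set.mem_Ioi.mpr hτ0) hτ.1) hτ0.le

lemma gauss (a r : ℝ) (ha : 0 < a) (hr : 0 ≤ r) :
    IntegrableOn (fun s => s * Real.exp (-(a * (s^2 - r^2)))) (Set.Ioi r) volume ∧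
    ∫ s in Set.Ioi r, s * Real.exp (-(a * (s^2 - r^2))) = 1/(2*a) := by
  set G : ℝ → ℝ := fun s => -(1/(2*a)) * Real.exp (-(a*(s^2-r^2))) with hG
  have hderiv : ∀ x : ℝ, HasDerivAt G (x * Real.exp (-(a*(x^2-r^2)))) x := by
    intro x
    have h1 : HasDerivAt (fun s : ℝ => -(a*(s^2-r^2))) (-(a*(2*x))) x := by
      have := (((hasDerivAt_pow 2 x).sub_const (r^2)).const_mul a).neg
      simpa [Pi.neg_def] using this
    have := (h1.exp).const_mul (-(1/(2*a)))
    refine this.congr_deriv ?_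
    field_simp
  have htend : Tendsto G atTop (nhds 0) := by
    have h2 : Tendsto (fun s : ℝ => a*(s^2-r^2)) atTop atTop := by
      apply Filter.Tendsto.const_mul_atTop ha
      apply Filter.tendsto_atTop_add_const_right
      exact tendsto_pow_atTop (two_ne_zero)
    have h3 : Tendsto (fun s : ℝ => -(a*(s^2-r^2))) atTop atBot :=
      Filter.tendsto_neg_atTop_atBot.comp h2
    have h4 := (Real.tendsto_exp_atBot.comp h3).const_mul (-(1/(2*a)))
    rw [mul_zero] at h4
    exact h4
  have hpos : ∀ x ∈ Set.Ioi r, 0 ≤ x * Real.exp (-(a*(x^2-r^2))) := fun x hx =>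
    mul_nonneg (le_trans hr (le_of_lt hx)) (Real.exp_nonneg _)
  refine ⟨integrableOn_Ioi_deriv_of_nonneg' (fun x _ => hderiv x) hpos htend, ?_⟩
  rw [integral_Ioi_of_hasDerivAt_of_nonneg' (fun x _ => hderiv x) hpos htend]
  simp only [hG]
  rw [show r^2 - r^2 = 0 by ring]
  simp

lemma prim_cont (hκmono : MonotoneOn κ (Set.Ioi 0))
    (hκ0 : Tendsto (fun r => r * κ r) (nhdsWithin 0 (Set.Ioi 0)) (nhds 0))
    {r : ℝ} (hr : 0 ≤ r) :
    ContinuousOn (fun s => ∫ τ in r..s, τ * κ τ) (Set.Ici r) := by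
  intro x hx
  have hx1 : x ≤ x + 1 := by linarith
  have h1 : ContinuousWithinAt (fun s => ∫ τ in r..s, τ * κ τ) (Set.Icc r (x+1)) x := by
    apply intervalIntegral.continuousWithinAt_primitive (measure_singleton x)
    rw [min_self, max_eq_right (by exact le_trans hx hx1)]
    exact intint hκmono hκ0 r (x+1) hr (le_trans hx hx1)
  apply h1.mono_of_mem_nhdsWithin
  have : Set.Ici r ∩ Set.Iic (x+1) ⊆ Set.Icc r (x+1) := fun y hy => ⟨hy.1, hy.2⟩
  exact Filter.mem_of_superset
    (Filter.inter_mem self_mem_nhdsWithin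
      (mem_nhdsWithin_of_mem_nhds (Iic_mem_nhds (by linarith)))) this

lemma integrand_cont (hκmono : MonotoneOn κ (Set.Ioi 0))
    (hκ0 : Tendsto (fun r => r * κ r) (nhdsWithin 0 (Set.Ioi 0)) (nhds 0))
    {r : ℝ} (hr : 0 ≤ r) :
    ContinuousOn (fun s => s * Real.exp (-(1/2) * ∫ τ in r..s, τ * κ τ)) (Set.Ici r) := by
  apply continuousOn_id.mul
  exact (Real.continuous_exp.comp_continuousOn
    ((continuousOn_const (c := -(1/2))).mul (prim_cont hκmono hκ0 hr)))

lemma Eint (hκmono : MonotoneOn κ (Set.Ioi 0))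
    (hκlim : Tendsto κ atTop (nhds κinf)) (hκinf : 0 < κinf)
    (hκ0 : Tendsto (fun r => r * κ r) (nhdsWithin 0 (Set.Ioi 0)) (nhds 0))
    {r : ℝ} (hr : 0 ≤ r) :
    IntegrableOn (fun s => s * Real.exp (-(1/2) * ∫ τ in r..s, τ * κ τ)) (Set.Ioi r) volume := by
  obtain ⟨a, hka, har1⟩ :
      ∃ a : ℝ, κinf/2 ≤ κ a ∧ max r 1 ≤ a := by
    have h1 : ∀ᶠ x in atTop, κinf/2 ≤ κ x :=
      hκlim.eventually (eventually_ge_nhds (by linarith))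
    obtain ⟨a, h2, h3⟩ := (h1.and (Filter.eventually_ge_atTop (max r 1))).exists
    exact ⟨a, h2, h3⟩
  have hra : r ≤ a := le_trans (le_max_left _ _) har1
  have ha0 : (0:ℝ) < a := lt_of_lt_of_le one_pos (le_trans (le_max_right _ _) har1)
  have hcont := integrand_cont hκmono hκ0 hr (κ := κ)
  -- part 1 : Ioc r a
  have hpart1 : IntegrableOn (fun s => s * Real.exp (-(1/2) * ∫ τ in r..s, τ * κ τ))
      (Set.Ioc r a) volume := by
    have hmeas : AEStronglyMeasurable (fun s => s * Real.exp (-(1/2) * ∫ τ in r..s, τ * κ τ))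
        (volume.restrict (Set.Ioc r a)) :=
      (hcont.mono (fun x hx => le_of_lt hx.1)).aestronglyMeasurable measurableSet_Ioc
    set B : ℝ := ∫ τ in r..a, |τ * κ τ| with hB
    refine ⟨hmeas, HasFiniteIntegral.restrict_of_bounded (C := a * Real.exp (B/2))
      measure_Ioc_lt_top ?_⟩
    refine (ae_restrict_iff' measurableSet_Ioc).mpr (ae_of_all _ fun s hs => ?_)
    have hs0 : 0 < s := lt_of_le_of_lt hr hs.1
    have habs : |∫ τ in r..s, τ * κ τ| ≤ B := by
      have h5 : |∫ τ in r..s, τ * κ τ| ≤ ∫ τ in r..s, |τ * κ τ| :=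
        intervalIntegral.abs_integral_le_integral_abs hs.1.le
      have h6 : (∫ τ in r..s, |τ * κ τ|) ≤ B := by
        rw [hB, ← intervalIntegral.integral_add_adjacent_intervals
          ((intint hκmono hκ0 r s hr hs.1.le).abs)
          ((intint hκmono hκ0 s a hs0.le hs.2).abs)]
        have h7 : 0 ≤ ∫ τ in s..a, |τ * κ τ| :=
          intervalIntegral.integral_nonneg hs.2 (fun x _ => abs_nonneg _)
        linarith
      linarith
    rw [Real.norm_eq_abs, abs_mul, abs_of_pos hs0]
    apply mul_le_mul hs.2 _ (abs_nonneg _) ha0.le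
    rw [Real.abs_exp, Real.exp_le_exp]
    have := neg_abs_le (∫ τ in r..s, τ * κ τ)
    nlinarith [abs_nonneg (∫ τ in r..s, τ * κ τ)]
  -- part 2 : Ioi a
  have hpart2 : IntegrableOn (fun s => s * Real.exp (-(1/2) * ∫ τ in r..s, τ * κ τ))
      (Set.Ioi a) volume := by
    set J : ℝ := ∫ τ in r..a, τ * κ τ with hJ
    have hmaj : IntegrableOn
        (fun s => Real.exp (-(1/2) * J) * (s * Real.exp (-(κinf/8 * (s^2 - a^2)))))
        (Set.Ioi a) volume :=
      ((gauss (κinf/8) a (by linarith) ha0.le).1).const_mul _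
    apply Integrable.mono' hmaj
    · refine (hcont.mono (fun x (hx : x ∈ Set.Ioi a) => ?_)).aestronglyMeasurable
        measurableSet_Ioi
      exact le_trans hra (le_of_lt hx)
    · refine (ae_restrict_iff' measurableSet_Ioi).mpr (ae_of_all _ fun s hs => ?_)
      have hsa : a < s := hs
      have hs0 : 0 < s := lt_trans ha0 hsa
      have hsplit : ∫ τ in r..s, τ * κ τ = J + ∫ τ in a..s, τ * κ τ := by
        rw [hJ, intervalIntegral.integral_add_adjacent_intervals
          (intint hκmono hκ0 r a hr hra) (intint hκmono hκ0 a s ha0.le hsa.le)]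
      have h8 : κinf/2 * (s^2 - a^2) / 2 ≤ ∫ τ in a..s, τ * κ τ := by
        have h9 := expo_ge hκmono hκ0 ha0 hsa.le
        have h10 : κinf/2 * (s^2 - a^2)/2 ≤ κ a * (s^2 - a^2)/2 := by
          have : 0 ≤ s^2 - a^2 := by nlinarith
          nlinarith
        linarith
      rw [Real.norm_eq_abs, abs_mul, abs_of_pos hs0, Real.abs_exp]
      rw [show Real.exp (-(1/2) * J) * (s * Real.exp (-(κinf/8 * (s^2 - a^2))))
        = s * (Real.exp (-(1/2) * J) * Real.exp (-(κinf/8 * (s^2 - a^2)))) by ring,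
        ← Real.exp_add]
      apply mul_le_mul_of_nonneg_left _ hs0.le
      rw [Real.exp_le_exp, hsplit]
      nlinarith
  have hunion : Set.Ioi r = Set.Ioc r a ∪ Set.Ioi a := (Set.Ioc_union_Ioi_eq_Ioi hra).symm
  rw [hunion]
  exact hpart1.union hpart2

lemma g_ge (hκmono : MonotoneOn κ (Set.Ioi 0))
    (hκlim : Tendsto κ atTop (nhds κinf)) (hκinf : 0 < κinf)
    (hκ0 : Tendsto (fun r => r * κ r) (nhdsWithin 0 (Set.Ioi 0)) (nhds 0))
    {r : ℝ} (hr : 0 ≤ r) : κinf⁻¹ ≤ Gfun κ r := by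
  have hg := gauss (κinf/4) r (by linarith) hr
  have h1 : (∫ s in Set.Ioi r, s * Real.exp (-(κinf/4 * (s^2 - r^2))))
      ≤ ∫ s in Set.Ioi r, s * Real.exp (-(1/2) * ∫ τ in r..s, τ * κ τ) := by
    apply setIntegral_mono_on hg.1 (Eint hκmono hκlim hκinf hκ0 hr) measurableSet_Ioi
    intro s hs
    have hs0 : 0 ≤ s := le_trans hr (le_of_lt hs)
    apply mul_le_mul_of_nonneg_left _ hs0
    rw [Real.exp_le_exp]
    have := expo_le hκmono hκlim hκ0 hr (le_of_lt hs)
    nlinarith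
  rw [hg.2] at h1
  rw [Gfun, show κinf⁻¹ = (1/2) * (1/(2*(κinf/4))) by field_simp; ring]
  apply mul_le_mul_of_nonneg_left h1 (by norm_num)

lemma g_pos (hκmono : MonotoneOn κ (Set.Ioi 0))
    (hκlim : Tendsto κ atTop (nhds κinf)) (hκinf : 0 < κinf)
    (hκ0 : Tendsto (fun r => r * κ r) (nhdsWithin 0 (Set.Ioi 0)) (nhds 0))
    {r : ℝ} (hr : 0 ≤ r) : 0 < Gfun κ r :=
  lt_of_lt_of_le (inv_pos.mpr hκinf) (g_ge hκmono hκlim hκinf hκ0 hr)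

lemma kg_le_one (hκmono : MonotoneOn κ (Set.Ioi 0))
    (hκlim : Tendsto κ atTop (nhds κinf)) (hκinf : 0 < κinf)
    (hκ0 : Tendsto (fun r => r * κ r) (nhdsWithin 0 (Set.Ioi 0)) (nhds 0))
    {t : ℝ} (ht : 0 < t) : max (κ t) 0 * Gfun κ t ≤ 1 := by
  rcases le_or_gt (κ t) 0 with h|h
  · rw [max_eq_right h, zero_mul]; norm_num
  · rw [max_eq_left h.le]
    have hgle : Gfun κ t ≤ 1/(κ t) := by
      have hg := gauss (κ t/4) t (by linarith) ht.le
      have h1 : (∫ s in Set.Ioi t, s * Real.exp (-(1/2) * ∫ τ in t..s, τ * κ τ))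
          ≤ ∫ s in Set.Ioi t, s * Real.exp (-(κ t/4 * (s^2 - t^2))) := by
        apply setIntegral_mono_on (Eint hκmono hκlim hκinf hκ0 ht.le) hg.1 measurableSet_Ioi
        intro s hs
        have hs0 : 0 ≤ s := le_trans ht.le (le_of_lt hs)
        apply mul_le_mul_of_nonneg_left _ hs0
        rw [Real.exp_le_exp]
        have := expo_ge hκmono hκ0 ht (le_of_lt hs)
        nlinarith
      rw [hg.2] at h1
      rw [Gfun, show 1/(κ t) = (1/2) * (1/(2*(κ t/4))) by field_simp; ring]
      apply mul_le_mul_of_nonneg_left h1 (by norm_num)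
    calc κ t * Gfun κ t ≤ κ t * (1/κ t) := mul_le_mul_of_nonneg_left hgle h.le
      _ = 1 := by field_simp

lemma gdiff (hκmono : MonotoneOn κ (Set.Ioi 0))
    (hκlim : Tendsto κ atTop (nhds κinf)) (hκinf : 0 < κinf)
    (hκ0 : Tendsto (fun r => r * κ r) (nhdsWithin 0 (Set.Ioi 0)) (nhds 0))
    {r h : ℝ} (hr : 0 ≤ r) (hh : 0 < h) :
    Gfun κ (r+h) - Gfun κ r ≤
      h * ((r+h)/2 - r/2 * Real.exp (-((r+h) * max (κ (r+h)) 0 * h / 2))) := by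
  set p : ℝ := r + h with hp
  have hp0 : 0 < p := by rw [hp]; linarith
  have hrp : r ≤ p := by rw [hp]; linarith
  set M : ℝ := p * max (κ p) 0 with hM
  have hM0 : 0 ≤ M := mul_nonneg hp0.le (le_max_right _ _)
  set c : ℝ := (1/2) * ∫ τ in r..p, τ * κ τ with hc
  have hbound : ∀ s, r ≤ s → s ≤ p → ∀ τ ∈ Set.Icc r s, τ * κ τ ≤ M := by
    intro s hrs hsp τ hτ
    have hτ0 : 0 ≤ τ := le_trans hr hτ.1
    rcases eq_or_lt_of_le hτ0 with h'|h'
    · rw [← h', zero_mul]; exact hM0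
    · rcases le_or_gt (κ τ) 0 with hk|hk
      · exact le_trans (mul_nonpos_of_nonneg_of_nonpos hτ0 hk) hM0
      · have h1 : κ τ ≤ κ p := hκmono (Set.mem_Ioi.mpr h') (Set.mem_Ioi.mpr hp0)
          (le_trans hτ.2 hsp)
        have hτp : τ ≤ p := le_trans hτ.2 hsp
        have h2 : τ * κ τ ≤ p * κ p := by
          nlinarith [mul_nonneg (sub_nonneg.mpr hτp) hk.le,
            mul_nonneg hp0.le (sub_nonneg.mpr h1)]
        have h3 : p * κ p ≤ M := by
          rw [hM]; exact mul_le_mul_of_nonneg_left (le_max_left _ _) hp0.le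
        linarith
  have hint_const : ∀ s, r ≤ s → s ≤ p → ∫ τ in r..s, τ * κ τ ≤ M * h := by
    intro s hrs hsp
    have h1 : ∫ τ in r..s, τ * κ τ ≤ ∫ τ in r..s, M :=
      intervalIntegral.integral_mono_on hrs (intint hκmono hκ0 r s hr hrs)
        (intervalIntegrable_const) (hbound s hrs hsp)
    rw [intervalIntegral.integral_const, smul_eq_mul] at h1
    have : (s - r) * M ≤ h * M := by
      apply mul_le_mul_of_nonneg_right _ hM0
      rw [hp] at hsp; linarith
    linarith [this, h1]
  have hcM : c ≤ M * h / 2 := by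
    have := hint_const p hrp le_rfl
    rw [hc]; linarith
  -- splitting
  have hiint := Eint hκmono hκlim hκinf hκ0 hr (κinf := κinf)
  have hIoc : IntegrableOn (fun s => s * Real.exp (-(1/2) * ∫ τ in r..s, τ * κ τ))
      (Set.Ioc r p) volume := hiint.mono_set Set.Ioc_subset_Ioi_self
  have hIoi : IntegrableOn (fun s => s * Real.exp (-(1/2) * ∫ τ in r..s, τ * κ τ))
      (Set.Ioi p) volume := hiint.mono_set (Set.Ioi_subset_Ioi hrp)
  have hsplit : Gfun κ r = (1/2) * (∫ s in Set.Ioc r p,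
        s * Real.exp (-(1/2) * ∫ τ in r..s, τ * κ τ)) + Real.exp (-c) * Gfun κ p := by
    have h1 : (∫ s in Set.Ioi r, s * Real.exp (-(1/2) * ∫ τ in r..s, τ * κ τ))
        = (∫ s in Set.Ioc r p, s * Real.exp (-(1/2) * ∫ τ in r..s, τ * κ τ))
          + ∫ s in Set.Ioi p, s * Real.exp (-(1/2) * ∫ τ in r..s, τ * κ τ) := by
      rw [← setIntegral_union (Set.Ioc_disjoint_Ioi le_rfl) measurableSet_Ioi hIoc hIoi,
        Set.Ioc_union_Ioi_eq_Ioi hrp]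
    have h2 : (∫ s in Set.Ioi p, s * Real.exp (-(1/2) * ∫ τ in r..s, τ * κ τ))
        = Real.exp (-c) * ∫ s in Set.Ioi p, s * Real.exp (-(1/2) * ∫ τ in p..s, τ * κ τ) := by
      rw [← integral_const_mul]
      apply setIntegral_congr_fun measurableSet_Ioi
      intro s hs
      have hps : p ≤ s := le_of_lt hs
      have h3 : ∫ τ in r..s, τ * κ τ = (∫ τ in r..p, τ * κ τ) + ∫ τ in p..s, τ * κ τ :=
        (intervalIntegral.integral_add_adjacent_intervals
          (intint hκmono hκ0 r p hr hrp) (intint hκmono hκ0 p s hp0.le hps)).symm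
      dsimp only
      rw [h3, hc]
      rw [show -(1/2) * ((∫ τ in r..p, τ * κ τ) + ∫ τ in p..s, τ * κ τ)
        = (-((1/2) * ∫ τ in r..p, τ * κ τ)) + (-(1/2) * ∫ τ in p..s, τ * κ τ) by ring,
        Real.exp_add]
      ring
    rw [Gfun, h1, h2, Gfun]
    ring
  -- lower bound on the Ioc piece
  have hpiece : r * Real.exp (-(M * h / 2)) * h
      ≤ ∫ s in Set.Ioc r p, s * Real.exp (-(1/2) * ∫ τ in r..s, τ * κ τ) := by
    have h1 : (∫ _s in Set.Ioc r p, (r * Real.exp (-(M * h / 2))))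
        ≤ ∫ s in Set.Ioc r p, s * Real.exp (-(1/2) * ∫ τ in r..s, τ * κ τ) := by
      apply setIntegral_mono_on (integrableOn_const measure_Ioc_lt_top.ne)
        hIoc measurableSet_Ioc
      intro s hs
      have hrs : r ≤ s := hs.1.le
      have hint := hint_const s hrs hs.2
      apply mul_le_mul hrs _ (Real.exp_nonneg _) (le_trans hr hrs)
      rw [Real.exp_le_exp]
      linarith
    rw [setIntegral_const, smul_eq_mul, Real.volume_real_Ioc_of_le hrp,
      show p - r = h by rw [hp]; ring] at h1
    linarith
  -- conclusion
  have hgp : 0 < Gfun κ p := g_pos hκmono hκlim hκinf hκ0 hp0.le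
  have hkg : max (κ p) 0 * Gfun κ p ≤ 1 := kg_le_one hκmono hκlim hκinf hκ0 hp0
  have honem : 1 - Real.exp (-c) ≤ c := by
    have := Real.add_one_le_exp (-c); linarith
  have hterm1 : (1 - Real.exp (-c)) * Gfun κ p ≤ h * p / 2 := by
    calc (1 - Real.exp (-c)) * Gfun κ p ≤ c * Gfun κ p :=
          mul_le_mul_of_nonneg_right honem hgp.le
      _ ≤ (M * h / 2) * Gfun κ p := mul_le_mul_of_nonneg_right hcM hgp.le
      _ = (h / 2) * (M * Gfun κ p) := by ring
      _ = (h / 2) * (p * (max (κ p) 0 * Gfun κ p)) := by rw [hM]; ring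
      _ ≤ (h / 2) * (p * 1) := by
          apply mul_le_mul_of_nonneg_left _ (by linarith)
          exact mul_le_mul_of_nonneg_left hkg hp0.le
      _ = h * p / 2 := by ring
  have hfin : Gfun κ p - Gfun κ r
      = (1 - Real.exp (-c)) * Gfun κ p
        - (1/2) * ∫ s in Set.Ioc r p, s * Real.exp (-(1/2) * ∫ τ in r..s, τ * κ τ) := by
    rw [hsplit]; ring
  rw [hfin]
  calc (1 - Real.exp (-c)) * Gfun κ p
        - (1/2) * ∫ s in Set.Ioc r p, s * Real.exp (-(1/2) * ∫ τ in r..s, τ * κ τ)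
      ≤ h * p / 2 - (1/2) * (r * Real.exp (-(M * h / 2)) * h) := by
        have h2 : (1/2) * (r * Real.exp (-(M * h / 2)) * h)
            ≤ (1/2) * ∫ s in Set.Ioc r p, s * Real.exp (-(1/2) * ∫ τ in r..s, τ * κ τ) :=
          mul_le_mul_of_nonneg_left hpiece (by norm_num)
        linarith
    _ = h * (p / 2 - r / 2 * Real.exp (-(M * h / 2))) := by ring

end aux

/-- The auxiliary function `f` defined by `f 0 = 0` and
`f'(r) = (1/2) ∫_r^∞ s exp(-(1/2) ∫_r^s τκ(τ) dτ) ds` is strictly increasing on `[0,∞)`,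
concave (`f'' ≤ 0`), and satisfies `1/κ_∞ ≤ f(r)/r ≤ f'(0)` for all `r > 0`. -/
theorem stmt_1 (κ : ℝ → ℝ) (κinf : ℝ)
    (hκmono : MonotoneOn κ (Set.Ioi 0))
    (hκlim : Tendsto κ atTop (nhds κinf)) (hκinf : 0 < κinf)
    (hκ0 : Tendsto (fun r => r * κ r) (nhdsWithin 0 (Set.Ioi 0)) (nhds 0))
    (f : ℝ → ℝ) (hf : ContDiffOn ℝ 2 f (Set.Ici 0))
    (hf0 : f 0 = 0)
    (hf' : ∀ r ≥ (0:ℝ), deriv f r =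
      (1/2) * ∫ s in Set.Ioi r, s * Real.exp (-(1/2) * ∫ τ in r..s, τ * κ τ)) :
    StrictMonoOn f (Set.Ici 0) ∧ (∀ r ≥ (0:ℝ), deriv (deriv f) r ≤ 0) ∧
      ∀ r > (0:ℝ), κinf⁻¹ ≤ f r / r ∧ f r / r ≤ deriv f 0 := by
  have hfG : ∀ r ≥ (0:ℝ), deriv f r = Gfun κ r := hf'
  have hGlb : ∀ r : ℝ, 0 ≤ r → κinf⁻¹ ≤ Gfun κ r :=
    fun r hr => g_ge hκmono hκlim hκinf hκ0 hr
  have hGpos : ∀ r : ℝ, 0 ≤ r → 0 < Gfun κ r :=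
    fun r hr => g_pos hκmono hκlim hκinf hκ0 hr
  -- Part 1
  have hmono : StrictMonoOn f (Set.Ici 0) := by
    apply strictMonoOn_of_deriv_pos (convex_Ici 0) hf.continuousOn
    intro x hx
    rw [interior_Ici] at hx
    rw [hfG x (le_of_lt hx)]
    exact hGpos x (le_of_lt hx)
  -- Part 2
  have hconc : ∀ r ≥ (0:ℝ), deriv (deriv f) r ≤ 0 := by
    intro r hr
    by_cases hdiff : DifferentiableAt ℝ (deriv f) r
    · have hD : HasDerivAt (deriv f) (deriv (deriv f) r) r := hdiff.hasDerivAt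
      have hD' : Tendsto (slope (deriv f) r) (nhdsWithin r (Set.Ioi r))
          (nhds (deriv (deriv f) r)) :=
        (hasDerivWithinAt_iff_tendsto_slope'
          (by simp : r ∉ Set.Ioi r)).mp (hD.hasDerivWithinAt (s := Set.Ioi r))
      have hmap : Tendsto (fun h : ℝ => r + h) (nhdsWithin 0 (Set.Ioi 0))
          (nhdsWithin r (Set.Ioi r)) := by
        rw [tendsto_nhdsWithin_iff]
        constructor
        · have h2 : Tendsto (fun h : ℝ => r + h) (nhds 0) (nhds (r + 0)) :=
            (continuous_const.add continuous_id).tendsto 0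
          rw [add_zero] at h2
          exact h2.mono_left nhdsWithin_le_nhds
        · filter_upwards [self_mem_nhdsWithin] with h hh
          exact Set.mem_Ioi.mpr (by linarith [Set.mem_Ioi.mp hh])
      have hq : Tendsto (fun h : ℝ => slope (deriv f) r (r + h))
          (nhdsWithin 0 (Set.Ioi 0)) (nhds (deriv (deriv f) r)) := hD'.comp hmap
      have hle : ∀ᶠ h : ℝ in nhdsWithin 0 (Set.Ioi 0), slope (deriv f) r (r + h) ≤
          (r+h)/2 - r/2 * Real.exp (-((r+h) * max (κ (r+h)) 0 * h / 2)) := by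
        filter_upwards [self_mem_nhdsWithin] with h hh
        have hh0 : 0 < h := Set.mem_Ioi.mp hh
        rw [slope_def_field, hfG (r+h) (by linarith), hfG r hr]
        rw [show r + h - r = h by ring]
        rw [div_le_iff₀ hh0]
        have := gdiff hκmono hκlim hκinf hκ0 hr hh0
        linarith [this]
      have hexp : Tendsto (fun h : ℝ => Real.exp (-((r+h) * max (κ (r+h)) 0 * h / 2)))
          (nhdsWithin 0 (Set.Ioi 0)) (nhds 1) := by
        have hlow : Tendsto (fun h : ℝ => Real.exp (-((r+h) * κinf * h / 2)))
            (nhdsWithin 0 (Set.Ioi 0)) (nhds 1) := by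
          have hc : Continuous (fun h : ℝ => Real.exp (-((r+h) * κinf * h / 2))) := by
            fun_prop
          have h3 := hc.tendsto 0
          simp only [add_zero, mul_zero, zero_div, neg_zero, Real.exp_zero] at h3
          exact h3.mono_left nhdsWithin_le_nhds
        apply tendsto_of_tendsto_of_tendsto_of_le_of_le' hlow
          (tendsto_const_nhds (x := (1:ℝ)))
        · filter_upwards [self_mem_nhdsWithin] with h hh
          have hh0 : 0 < h := Set.mem_Ioi.mp hh
          rw [Real.exp_le_exp, neg_le_neg_iff]
          have hk : max (κ (r+h)) 0 ≤ κinf :=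
            max_le (kle hκmono hκlim (r+h) (by linarith)) hκinf.le
          have hrh : (0:ℝ) ≤ r + h := by linarith
          nlinarith [mul_nonneg hrh (sub_nonneg.mpr hk)]
        · filter_upwards [self_mem_nhdsWithin] with h hh
          have hh0 : 0 < h := Set.mem_Ioi.mp hh
          rw [show (1:ℝ) = Real.exp 0 by rw [Real.exp_zero], Real.exp_le_exp]
          have : (0:ℝ) ≤ (r+h) * max (κ (r+h)) 0 * h / 2 := by
            have h1 : (0:ℝ) ≤ (r+h) := by linarith
            have h2 : (0:ℝ) ≤ max (κ (r+h)) 0 := le_max_right _ _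
            positivity
          linarith
      have hu : Tendsto (fun h : ℝ =>
          (r+h)/2 - r/2 * Real.exp (-((r+h) * max (κ (r+h)) 0 * h / 2)))
          (nhdsWithin 0 (Set.Ioi 0)) (nhds 0) := by
        have h1 : Tendsto (fun h : ℝ => (r+h)/2) (nhdsWithin 0 (Set.Ioi 0))
            (nhds (r/2)) := by
          have hc : Continuous (fun h : ℝ => (r+h)/2) := by fun_prop
          have := hc.tendsto 0
          rw [add_zero] at this
          exact this.mono_left nhdsWithin_le_nhds
        have h2 := h1.sub ((tendsto_const_nhds (x := r/2)).mul hexp)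
        rw [show r/2 - r/2 * 1 = 0 by ring] at h2
        exact h2
      exact le_of_tendsto_of_tendsto hq hu hle
    · rw [deriv_zero_of_not_differentiableAt hdiff]
  -- Part 3 preliminaries
  have hfd0 : DifferentiableAt ℝ f 0 := by
    by_contra hc
    have h0 := hfG 0 le_rfl
    rw [deriv_zero_of_not_differentiableAt hc] at h0
    exact absurd h0.symm (ne_of_gt (hGpos 0 le_rfl))
  have hfdAt : ∀ x : ℝ, 0 < x → DifferentiableAt ℝ f x := fun x hx =>
    (hf.differentiableOn (by norm_num)).differentiableAt (Ici_mem_nhds hx)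
  have hDW := hf.derivWithin (uniqueDiffOn_Ici 0) (m := 1) (by norm_num)
  have hDWeq : Set.EqOn (derivWithin f (Set.Ici 0)) (deriv f) (Set.Ici 0) := by
    intro x hx
    rcases eq_or_lt_of_le (Set.mem_Ici.mp hx) with h|h
    · rw [← h]
      exact (hfd0.hasDerivAt.hasDerivWithinAt).derivWithin
        (uniqueDiffOn_Ici 0 0 Set.self_mem_Ici)
    · exact derivWithin_of_mem_nhds (Ici_mem_nhds h)
  have hcd : ContinuousOn (deriv f) (Set.Ici 0) :=
    (hDW.continuousOn).congr hDWeq.symm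
  have hdd : DifferentiableOn ℝ (deriv f) (Set.Ioi 0) := by
    apply DifferentiableOn.congr ((hDW.differentiableOn one_ne_zero).mono
      Set.Ioi_subset_Ici_self)
    intro x hx
    exact (hDWeq (Set.Ioi_subset_Ici_self hx)).symm
  have hanti : AntitoneOn (deriv f) (Set.Ici 0) := by
    apply antitoneOn_of_deriv_nonpos (convex_Ici 0) hcd
    · rw [interior_Ici]; exact hdd
    · intro x hx
      rw [interior_Ici] at hx
      exact hconc x (le_of_lt hx)
  refine ⟨hmono, hconc, ?_⟩
  intro r hr
  constructor
  · -- lower bound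
    set ψ : ℝ → ℝ := fun x => f x - κinf⁻¹ * x with hψdef
    have hψ : MonotoneOn ψ (Set.Ici 0) := by
      apply monotoneOn_of_deriv_nonneg (convex_Ici 0)
        (hf.continuousOn.sub (by fun_prop))
      · rw [interior_Ici]
        intro x hx
        exact ((hfdAt x hx).sub (by fun_prop)).differentiableWithinAt
      · intro x hx
        rw [interior_Ici] at hx
        have hd : HasDerivAt ψ (deriv f x - κinf⁻¹) x := by
          have h1 := ((hfdAt x hx).hasDerivAt.sub
            ((hasDerivAt_id x).const_mul κinf⁻¹))
          simpa [Pi.sub_def] using h1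
        change 0 ≤ deriv ψ x; rw [hd.deriv]
        have := hGlb x (le_of_lt hx)
        rw [← hfG x (le_of_lt hx)] at this
        linarith
    have h1 := hψ Set.self_mem_Ici (Set.mem_Ici.mpr hr.le) hr.le
    simp only [hψdef, hf0, mul_zero, sub_zero] at h1
    rw [le_div_iff₀ hr]
    rw [mul_comm]
    linarith
  · -- upper bound
    set φ : ℝ → ℝ := fun x => deriv f 0 * x - f x with hφdef
    have hφ : MonotoneOn φ (Set.Ici 0) := by
      apply monotoneOn_of_deriv_nonneg (convex_Ici 0)
        ((by fun_prop : Continuous fun x : ℝ => deriv f 0 * x).continuousOn.sub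
          hf.continuousOn)
      · rw [interior_Ici]
        intro x hx
        exact ((((hasDerivAt_id x).const_mul (deriv f 0)).differentiableAt).sub
          (hfdAt x hx)).differentiableWithinAt
      · intro x hx
        rw [interior_Ici] at hx
        have hd : HasDerivAt φ (deriv f 0 - deriv f x) x := by
          have h1 := (((hasDerivAt_id x).const_mul (deriv f 0)).sub
            (hfdAt x hx).hasDerivAt)
          simpa [Pi.sub_def] using h1
        change 0 ≤ deriv φ x; rw [hd.deriv]
        have := hanti Set.self_mem_Ici (Set.mem_Ici.mpr hx.le) hx.le
        linarith
    have h1 := hφ Set.self_mem_Ici (Set.mem_Ici.mpr hr.le) hr.le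
    simp only [hφdef, hf0, mul_zero, sub_zero] at h1
    rw [div_le_iff₀ hr]
    rw [mul_comm] at h1 ⊢
    linarith
end

section
/- Let φ:[0,∞)→[0,∞) be continuous with φ(0)=0, and suppose there exist constants C>0, η>0, f'(0)>0 with ηf'(0)<1 and 0<ε<min{ε₀, 1−ηf'(0)} (for some ε₀∈(0,1]) such that ∫₀¹ φ(ts) ds ≤ ηf'(0) ∫₀¹∫₀¹ φ(t s₁ s₂) ds₁ ds₂ + C(1 ∧ t^{−ε₀}) for all t ≥ 0. Then sup_{t≥0} t^ε ∫₀¹ φ(ts) ds ≤ C/(1 − ε − ηf'(0)). -/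
open MeasureTheory Real

/-- The comparison/claim argument: if a nonnegative continuous `φ` with `φ 0 = 0` satisfies
`∫₀¹ φ(ts) ds ≤ ηf'(0) ∫₀¹∫₀¹ φ(ts₁s₂) ds₁ ds₂ + C(1 ∧ t^{-ε₀})` for all `t ≥ 0`,
then `sup_{t ≥ 0} t^ε ∫₀¹ φ(ts) ds ≤ C / (1 - ε - ηf'(0))`. -/
theorem stmt_2 (φ : ℝ → ℝ) (hφc : ContinuousOn φ (Set.Ici 0)) (hφ0 : φ 0 = 0)
    (hφnn : ∀ t ≥ (0:ℝ), 0 ≤ φ t)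
    (C η fp0 ε₀ ε : ℝ) (hC : 0 < C) (hη : 0 < η) (hfp0 : 0 < fp0)
    (hηf : η * fp0 < 1) (hε₀ : ε₀ ∈ Set.Ioc (0:ℝ) 1)
    (hε : 0 < ε) (hεlt : ε < min ε₀ (1 - η * fp0))
    (hineq : ∀ t ≥ (0:ℝ), (∫ s in (0:ℝ)..1, φ (t * s)) ≤
      η * fp0 * (∫ s₁ in (0:ℝ)..1, ∫ s₂ in (0:ℝ)..1, φ (t * s₁ * s₂)) +
        C * min 1 (t ^ (-ε₀))) :
    ∀ t ≥ (0:ℝ), t ^ ε * (∫ s in (0:ℝ)..1, φ (t * s)) ≤ C / (1 - ε - η * fp0) := by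
  obtain ⟨hε₀0, hε₀1⟩ := hε₀
  have hεε₀ : ε < ε₀ := hεlt.trans_le (min_le_left _ _)
  have hεη : ε < 1 - η * fp0 := hεlt.trans_le (min_le_right _ _)
  have hηfpos : 0 < η * fp0 := mul_pos hη hfp0
  have h1ε : (0:ℝ) < 1 - ε := by linarith
  -- continuous extension of φ to all of ℝ
  set ψ : ℝ → ℝ := fun x => φ (max x 0) with hψdef
  have hψc : Continuous ψ :=
    hφc.comp_continuous (continuous_id.max continuous_const) fun x => Set.mem_Ici.2 (le_max_right _ _)
  have hψeq : ∀ x ≥ (0:ℝ), ψ x = φ x := fun x hx => by simp [ψ, max_eq_left hx]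
  set G : ℝ → ℝ := fun t => ∫ s in (0:ℝ)..1, ψ (t * s) with hGdef
  have hGc : Continuous G := by
    apply intervalIntegral.continuous_parametric_intervalIntegral_of_continuous'
      (f := fun t s => ψ (t * s))
    exact hψc.comp (continuous_fst.mul continuous_snd)
  have hGF : ∀ t ≥ (0:ℝ), G t = ∫ s in (0:ℝ)..1, φ (t * s) := by
    intro t ht
    apply intervalIntegral.integral_congr
    intro s hs
    rw [Set.uIcc_of_le (by norm_num : (0:ℝ) ≤ 1)] at hs
    exact hψeq _ (mul_nonneg ht hs.1)
  have hG0 : G 0 = 0 := by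
    simp [G, ψ, hφ0]
  set g : ℝ → ℝ := fun t => t ^ ε * G t with hgdef
  have hgc : Continuous g :=
    (continuous_id.rpow_const fun _ => Or.inr hε.le).mul hGc
  intro T hT
  -- maximum of g on [0, T]
  obtain ⟨t₀, ht₀mem, ht₀max'⟩ :=
    (isCompact_Icc (a := (0:ℝ)) (b := T)).exists_isMaxOn (Set.nonempty_Icc.2 hT)
      hgc.continuousOn
  have ht₀max : ∀ x ∈ Set.Icc (0:ℝ) T, g x ≤ g t₀ := fun x hx => ht₀max' hx
  obtain ⟨ht₀0, ht₀T⟩ := ht₀mem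
  set M := g t₀ with hMdef
  have hg0 : g 0 = 0 := by simp [g, hG0]
  have hM0 : 0 ≤ M := by
    have := ht₀max 0 ⟨le_refl _, hT⟩
    rw [hg0] at this; exact this
  have ht₀ε : (0:ℝ) ≤ t₀ ^ ε := Real.rpow_nonneg ht₀0 ε
  -- Step A : t₀^ε * ∫₀¹ G (t₀ s) ds ≤ M / (1 - ε)
  have hintD : (∫ s₁ in (0:ℝ)..1, ∫ s₂ in (0:ℝ)..1, φ (t₀ * s₁ * s₂))
      = ∫ s in (0:ℝ)..1, G (t₀ * s) := by
    apply intervalIntegral.integral_congr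
    intro s hs
    rw [Set.uIcc_of_le (by norm_num : (0:ℝ) ≤ 1)] at hs
    exact (hGF _ (mul_nonneg ht₀0 hs.1)).symm
  have hstepA : t₀ ^ ε * (∫ s in (0:ℝ)..1, G (t₀ * s)) ≤ M * (1 - ε)⁻¹ := by
    rw [← intervalIntegral.integral_const_mul]
    have hmono : (∫ s in (0:ℝ)..1, t₀ ^ ε * G (t₀ * s))
        ≤ ∫ s in (0:ℝ)..1, M * s ^ (-ε) := by
      apply intervalIntegral.integral_mono_on (by norm_num)
      · exact (Continuous.intervalIntegrable (by fun_prop) _ _).const_mul _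
      · exact (intervalIntegral.intervalIntegrable_rpow' (by linarith)).const_mul _
      · intro s hs
        obtain ⟨hs0, hs1⟩ := hs
        rcases eq_or_lt_of_le hs0 with h | hspos
        · rw [← h]
          simp [hG0, Real.zero_rpow (by linarith : -ε ≠ 0)]
        · have hsε : (0:ℝ) < s ^ ε := Real.rpow_pos_of_pos hspos ε
          rw [Real.rpow_neg hspos.le, ← div_eq_mul_inv, le_div_iff₀ hsε]
          calc t₀ ^ ε * G (t₀ * s) * s ^ ε = g (t₀ * s) := by
                show _ = (t₀ * s) ^ ε * G (t₀ * s)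
                rw [Real.mul_rpow ht₀0 hspos.le]; ring
            _ ≤ M := ht₀max (t₀ * s) ⟨mul_nonneg ht₀0 hspos.le,
                (mul_le_of_le_one_right ht₀0 hs1).trans ht₀T⟩
    have hval : (∫ s in (0:ℝ)..1, M * s ^ (-ε)) = M * (1 - ε)⁻¹ := by
      rw [intervalIntegral.integral_const_mul, integral_rpow (Or.inl (by linarith))]
      rw [Real.one_rpow, Real.zero_rpow (by linarith : -ε + 1 ≠ 0)]
      ring_nf
    linarith [hmono, hval.le, hval.ge]
  -- Step B : t₀^ε * min 1 (t₀^{-ε₀}) ≤ 1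
  have hstepB : t₀ ^ ε * min 1 (t₀ ^ (-ε₀)) ≤ 1 := by
    rcases le_or_gt t₀ 1 with h1 | h1
    · have h2 : t₀ ^ ε ≤ 1 := Real.rpow_le_one ht₀0 h1 hε.le
      have h3 : min 1 (t₀ ^ (-ε₀)) ≤ 1 := min_le_left _ _
      have h4 : 0 ≤ min 1 (t₀ ^ (-ε₀)) :=
        le_min zero_le_one (Real.rpow_nonneg ht₀0 _)
      calc t₀ ^ ε * min 1 (t₀ ^ (-ε₀)) ≤ 1 * 1 := mul_le_mul h2 h3 h4 zero_le_one
        _ = 1 := by ring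
    · have hmin : min 1 (t₀ ^ (-ε₀)) = t₀ ^ (-ε₀) :=
        min_eq_right (Real.rpow_le_one_of_one_le_of_nonpos h1.le (by linarith))
      rw [hmin, ← Real.rpow_add (by linarith : (0:ℝ) < t₀)]
      exact Real.rpow_le_one_of_one_le_of_nonpos h1.le (by linarith)
  -- Bootstrap
  have hMineq : M ≤ η * fp0 * (M * (1 - ε)⁻¹) + C := by
    have h2 := mul_le_mul_of_nonneg_left (hineq t₀ ht₀0) ht₀ε
    calc M = t₀ ^ ε * ∫ s in (0:ℝ)..1, φ (t₀ * s) := by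
          show t₀ ^ ε * G t₀ = _
          rw [hGF t₀ ht₀0]
      _ ≤ t₀ ^ ε * (η * fp0 * (∫ s₁ in (0:ℝ)..1, ∫ s₂ in (0:ℝ)..1, φ (t₀ * s₁ * s₂)) +
            C * min 1 (t₀ ^ (-ε₀))) := h2
      _ = η * fp0 * (t₀ ^ ε * (∫ s in (0:ℝ)..1, G (t₀ * s))) +
            C * (t₀ ^ ε * min 1 (t₀ ^ (-ε₀))) := by rw [hintD]; ring
      _ ≤ η * fp0 * (M * (1 - ε)⁻¹) + C * 1 := by
          gcongr
      _ = η * fp0 * (M * (1 - ε)⁻¹) + C := by ring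
  have hMle : M ≤ C / (1 - ε - η * fp0) := by
    rw [le_div_iff₀ (by linarith : (0:ℝ) < 1 - ε - η * fp0)]
    have h2 := mul_le_mul_of_nonneg_right hMineq h1ε.le
    have h4 : (η * fp0 * (M * (1 - ε)⁻¹) + C) * (1 - ε) = η * fp0 * M + C * (1 - ε) := by
      field_simp
    rw [h4] at h2
    nlinarith [mul_pos hC hε]
  have : T ^ ε * (∫ s in (0:ℝ)..1, φ (T * s)) = g T := by
    rw [hgdef]; simp only []; rw [hGF T hT]
  rw [this]
  exact (ht₀max T ⟨hT, le_refl T⟩).trans hMle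
end

section
/- Fix τ > 0 and define the discrete-sampling weight family w^τ by w^τ_t = (1/n)∑_{k=1}^n δ_{kτ/t} for nτ ≤ t < (n+1)τ (n ≥ 1) and w^τ_t = δ_0 for 0 ≤ t < τ. Then for every ε ∈ (0,1), sup_{t≥0} ∫₀¹ (t^ε ∧ s^{−ε}) w^τ_t(ds) < ∞ and sup_{t≥0} ∫₀¹∫₀¹ (t^ε ∧ |s₁−s₂|^{−ε}) w^τ_t(ds₁)w^τ_t(ds₂) < ∞. -/
open MeasureTheory Real ENNReal

/-- The discrete-sampling weight family with step `τ`: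
`w^τ_t = (1/n) ∑_{k=1}^n δ_{kτ/t}` for `nτ ≤ t < (n+1)τ` (`n = ⌊t/τ⌋ ≥ 1`),
and `w^τ_t = δ₀` for `0 ≤ t < τ`. -/
noncomputable def wtau (τ t : ℝ) : Measure ℝ :=
  if t < τ then Measure.dirac 0
  else ((⌊t / τ⌋₊ : ℝ≥0∞))⁻¹ • ∑ k ∈ Finset.Icc 1 ⌊t / τ⌋₊, Measure.dirac ((k : ℝ) * τ / t)

/-- `∑_{k=1}^n k^{-ε} ≤ n^{1-ε}/(1-ε)` for `0 < ε < 1`. -/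
lemma sum_neg_rpow_le {ε : ℝ} (hε : ε ∈ Set.Ioo (0:ℝ) 1) (n : ℕ) :
    ∑ k ∈ Finset.Icc 1 n, ((k:ℝ)) ^ (-ε) ≤ (n:ℝ) ^ (1-ε) / (1-ε) := by
  have hε1 : (0:ℝ) < 1 - ε := by linarith [hε.2]
  induction n with
  | zero => simp; positivity
  | succ n ih =>
    rw [Finset.sum_Icc_succ_top (by omega)]
    have ha : (0:ℝ) < ((n:ℝ)+1) ^ ε := Real.rpow_pos_of_pos (by positivity) _
    have h1 : ((n:ℝ)+1) ^ ε * (n:ℝ) ^ (1-ε) ≤ (n:ℝ) + ε := by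
      have := Real.geom_mean_le_arith_mean2_weighted hε.1.le hε1.le
        (p₁ := (n:ℝ)+1) (p₂ := (n:ℝ)) (by positivity) n.cast_nonneg (by ring)
      linarith
    have e1 : ((n:ℝ)+1) ^ (-ε) = (((n:ℝ)+1) ^ ε)⁻¹ := Real.rpow_neg (by positivity) ε
    have e2 : ((n:ℝ)+1) ^ (1-ε) = ((n:ℝ)+1) / ((n:ℝ)+1) ^ ε := by
      rw [Real.rpow_sub (by positivity), Real.rpow_one]
    have key : (n:ℝ) ^ (1-ε) / (1-ε) + ((n:ℝ)+1) ^ (-ε) ≤ ((n:ℝ)+1) ^ (1-ε) / (1-ε) := by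
      rw [e1, e2]
      rw [div_add' _ _ _ (ne_of_gt hε1)]
      gcongr
      rw [le_div_iff₀ ha]
      have hc : (((n:ℝ)+1) ^ ε)⁻¹ * ((n:ℝ)+1) ^ ε = 1 := inv_mul_cancel₀ (ne_of_gt ha)
      nlinarith [h1]
    push_cast
    linarith [key, ih]

/-- `∑_{j=1}^n |k - j|^{-ε} ≤ 2 n^{1-ε}/(1-ε)` for `1 ≤ k ≤ n`. -/
lemma sum_abs_neg_rpow_le {ε : ℝ} (hε : ε ∈ Set.Ioo (0:ℝ) 1) (n k : ℕ)
    (hk : k ∈ Finset.Icc 1 n) :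
    ∑ j ∈ Finset.Icc 1 n, |(k:ℝ) - (j:ℝ)| ^ (-ε) ≤ 2 * ((n:ℝ) ^ (1-ε) / (1-ε)) := by
  have hsum := sum_neg_rpow_le hε n
  rw [← Finset.sum_filter_add_sum_filter_not (Finset.Icc 1 n)
    (fun j => j < k) (fun j => |(k:ℝ) - (j:ℝ)| ^ (-ε))]
  have h1 : ∑ j ∈ (Finset.Icc 1 n).filter (fun j => j < k), |(k:ℝ) - (j:ℝ)| ^ (-ε)
      ≤ ∑ d ∈ Finset.Icc 1 n, ((d:ℝ)) ^ (-ε) := by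
    have himg : ∑ j ∈ (Finset.Icc 1 n).filter (fun j => j < k), |(k:ℝ) - (j:ℝ)| ^ (-ε)
        = ∑ d ∈ ((Finset.Icc 1 n).filter (fun j => j < k)).image (fun j => k - j),
            ((d:ℝ)) ^ (-ε) := by
      rw [Finset.sum_image (fun a ha b hb hab => by
        simp only [Finset.mem_coe, Finset.mem_filter] at ha hb; omega)]
      refine Finset.sum_congr rfl fun j hj => ?_
      simp only [Finset.mem_filter, Finset.mem_Icc] at hj
      have : |(k:ℝ) - (j:ℝ)| = ((k - j : ℕ) : ℝ) := by
        rw [Nat.cast_sub hj.2.le, abs_of_nonneg (sub_nonneg.2 (Nat.cast_le.2 hj.2.le))]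
      rw [this]
    rw [himg]
    refine Finset.sum_le_sum_of_subset_of_nonneg ?_ (fun d _ _ => by positivity)
    intro d hd
    simp only [Finset.mem_image, Finset.mem_filter, Finset.mem_Icc] at hd
    obtain ⟨j, ⟨⟨hj1, hj2⟩, hjk⟩, rfl⟩ := hd
    simp only [Finset.mem_Icc] at hk ⊢
    omega
  have h2 : ∑ j ∈ (Finset.Icc 1 n).filter (fun j => ¬ j < k), |(k:ℝ) - (j:ℝ)| ^ (-ε)
      ≤ ∑ d ∈ Finset.Icc 1 n, ((d:ℝ)) ^ (-ε) := by
    have himg : ∑ j ∈ (Finset.Icc 1 n).filter (fun j => ¬ j < k), |(k:ℝ) - (j:ℝ)| ^ (-ε)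
        = ∑ d ∈ ((Finset.Icc 1 n).filter (fun j => ¬ j < k)).image (fun j => j - k),
            ((d:ℝ)) ^ (-ε) := by
      rw [Finset.sum_image (fun a ha b hb hab => by
        simp only [Finset.mem_coe, Finset.mem_filter] at ha hb; omega)]
      refine Finset.sum_congr rfl fun j hj => ?_
      simp only [Finset.mem_filter, Finset.mem_Icc, not_lt] at hj
      have : |(k:ℝ) - (j:ℝ)| = ((j - k : ℕ) : ℝ) := by
        rw [Nat.cast_sub hj.2, abs_sub_comm,
          abs_of_nonneg (sub_nonneg.2 (Nat.cast_le.2 hj.2))]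
      rw [this]
    rw [himg]
    have hins : ∑ d ∈ insert 0 (Finset.Icc 1 n), ((d:ℝ)) ^ (-ε)
        = ∑ d ∈ Finset.Icc 1 n, ((d:ℝ)) ^ (-ε) := by
      rw [Finset.sum_insert (by simp), Nat.cast_zero,
        Real.zero_rpow (by simpa using hε.1.ne'), zero_add]
    rw [← hins]
    refine Finset.sum_le_sum_of_subset_of_nonneg ?_ (fun d _ _ => by positivity)
    intro d hd
    simp only [Finset.mem_image, Finset.mem_filter, Finset.mem_Icc, not_lt] at hd
    obtain ⟨j, ⟨⟨hj1, hj2⟩, hjk⟩, rfl⟩ := hd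
    simp only [Finset.mem_insert, Finset.mem_Icc] at hk ⊢
    omega
  linarith

/-- Integral against `wtau τ t` for `t ≥ τ` is the average of samples. -/
lemma integral_wtau {τ t : ℝ} (ht : τ ≤ t) {f : ℝ → ℝ} (hf : Measurable f) :
    ∫ s, f s ∂(wtau τ t)
      = (⌊t/τ⌋₊:ℝ)⁻¹ * ∑ k ∈ Finset.Icc 1 ⌊t/τ⌋₊, f ((k:ℝ) * τ / t) := by
  rw [wtau, if_neg (not_lt.2 ht), integral_smul_measure,
    integral_finset_sum_measure (fun k _ => ?_)]
  · simp [integral_dirac, smul_eq_mul]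
  · refine ⟨hf.aestronglyMeasurable, ?_⟩
    simp [HasFiniteIntegral, lintegral_dirac]

/-- The key pointwise bound: `min (t^ε) ((xτ/t)^{-ε}) ≤ M^ε x^{-ε}` when `t ≤ Mτ`. -/
lemma min_rpow_key {ε : ℝ} (hε : ε ∈ Set.Ioo (0:ℝ) 1) {τ t M : ℝ} (hτ : 0 < τ)
    (ht : 0 < t) (hM0 : 0 < M) (hM : t ≤ M * τ) (x : ℝ) (hx : 0 ≤ x) :
    min (t ^ ε) ((x * τ / t) ^ (-ε)) ≤ M ^ ε * x ^ (-ε) := by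
  rcases eq_or_lt_of_le hx with h0 | h0
  · rw [← h0]
    rw [zero_mul, zero_div, Real.zero_rpow (by simpa using hε.1.ne'), mul_zero]
    exact min_le_of_right_le le_rfl
  · refine le_trans (min_le_right _ _) ?_
    have hxt : 0 < x * τ / t := by positivity
    have e1 : (x * τ / t) ^ (-ε) = (t / (x * τ)) ^ ε := by
      rw [Real.rpow_neg hxt.le, ← Real.inv_rpow hxt.le, inv_div]
    have e2 : (M / x) ^ ε = M ^ ε * x ^ (-ε) := by
      rw [Real.div_rpow hM0.le hx, Real.rpow_neg hx, div_eq_mul_inv]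
    rw [e1, ← e2]
    apply Real.rpow_le_rpow (by positivity) ?_ hε.1.le
    rw [div_le_div_iff₀ (by positivity) h0]
    nlinarith

/-- Final arithmetic: `n⁻¹ (2n)^ε (c n^{1-ε}/(1-ε)) ≤ 2c/(1-ε)`. -/
lemma final_arith {ε : ℝ} (hε : ε ∈ Set.Ioo (0:ℝ) 1) {n : ℕ} (hn : 1 ≤ n)
    {c : ℝ} (hc : 0 ≤ c) :
    ((n:ℝ))⁻¹ * ((2*(n:ℝ)) ^ ε * (c * ((n:ℝ) ^ (1-ε) / (1-ε)))) ≤ 2 * c / (1-ε) := by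
  have hε1 : (0:ℝ) < 1 - ε := by linarith [hε.2]
  have hn0 : (0:ℝ) < n := by exact_mod_cast hn
  have e1 : ((2*(n:ℝ))) ^ ε = 2 ^ ε * (n:ℝ) ^ ε := Real.mul_rpow (by norm_num) hn0.le
  have e2 : (n:ℝ) ^ ε * (n:ℝ) ^ (1-ε) = (n:ℝ) := by
    rw [← Real.rpow_add hn0, show ε + (1-ε) = 1 by ring, Real.rpow_one]
  have h2 : (2:ℝ) ^ ε ≤ 2 := by
    calc (2:ℝ) ^ ε ≤ (2:ℝ) ^ (1:ℝ) :=
      Real.rpow_le_rpow_of_exponent_le one_le_two hε.2.le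
    _ = 2 := Real.rpow_one 2
  have key : ((n:ℝ))⁻¹ * ((2*(n:ℝ)) ^ ε * (c * ((n:ℝ) ^ (1-ε) / (1-ε))))
      = 2 ^ ε * c / (1-ε) := by
    rw [e1, show (2:ℝ) ^ ε * (n:ℝ) ^ ε * (c * ((n:ℝ) ^ (1-ε) / (1-ε)))
      = 2 ^ ε * c * ((n:ℝ) ^ ε * (n:ℝ) ^ (1-ε)) / (1-ε) by ring, e2,
      show ((n:ℝ))⁻¹ * (2 ^ ε * c * (n:ℝ) / (1-ε))
      = 2 ^ ε * c * ((n:ℝ)⁻¹ * (n:ℝ)) / (1-ε) by ring,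
      inv_mul_cancel₀ (ne_of_gt hn0), mul_one]
  rw [key]
  gcongr

/-- The discrete-sampling weight family `w^τ` lies in `Π₂(ε)` for every `ε ∈ (0,1)`:
`∫₀¹ (t^ε ∧ s^{-ε}) w^τ_t(ds)` and `∫₀¹∫₀¹ (t^ε ∧ |s₁−s₂|^{-ε}) w^τ_t(ds₁)w^τ_t(ds₂)`
are bounded uniformly in `t ≥ 0`. -/
theorem stmt_14 (τ : ℝ) (hτ : 0 < τ) (ε : ℝ) (hε : ε ∈ Set.Ioo (0:ℝ) 1) :
    ∃ C : ℝ, ∀ t ≥ (0:ℝ),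
      (∫ s, min (t ^ ε) (s ^ (-ε)) ∂(wtau τ t)) ≤ C ∧
      (∫ s₁, ∫ s₂, min (t ^ ε) (|s₁ - s₂| ^ (-ε)) ∂(wtau τ t) ∂(wtau τ t)) ≤ C := by
  have hε1 : (0:ℝ) < 1 - ε := by linarith [hε.2]
  have hne : -ε ≠ 0 := by simpa using hε.1.ne'
  refine ⟨4 / (1-ε), fun t ht0 => ?_⟩
  by_cases htτ : t < τ
  · -- `wtau τ t = dirac 0`, both integrals vanish
    have hw : wtau τ t = Measure.dirac 0 := by rw [wtau, if_pos htτ]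
    have hmin : ∀ a : ℝ, 0 ≤ a → min a ((0:ℝ) ^ (-ε)) = 0 := by
      intro a ha; rw [Real.zero_rpow hne, min_eq_right ha]
    constructor
    · rw [hw, integral_dirac]
      rw [hmin _ (Real.rpow_nonneg ht0 ε)]
      positivity
    · rw [hw, integral_dirac, integral_dirac, sub_self, abs_zero,
        hmin _ (Real.rpow_nonneg ht0 ε)]
      positivity
  · -- main case `t ≥ τ`
    push_neg at htτ
    have htpos : 0 < t := lt_of_lt_of_le hτ htτ
    set n := ⌊t/τ⌋₊ with hn
    have hn1 : 1 ≤ n := Nat.le_floor (by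
      rw [Nat.cast_one]; exact (one_le_div hτ).2 htτ)
    have hnpos : (0:ℝ) < (n:ℝ) := by exact_mod_cast hn1
    have hM0 : (0:ℝ) < 2 * (n:ℝ) := by positivity
    have hM : t ≤ 2 * (n:ℝ) * τ := by
      have h1 : t / τ < (n:ℝ) + 1 := Nat.lt_floor_add_one (t/τ)
      have h2 : t < ((n:ℝ) + 1) * τ := (div_lt_iff₀ hτ).1 h1
      have hn1' : (1:ℝ) ≤ (n:ℝ) := by exact_mod_cast hn1
      have h3 : ((n:ℝ) + 1) * τ ≤ 2 * (n:ℝ) * τ := by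
        nlinarith [mul_nonneg (sub_nonneg.2 hn1') hτ.le]
      linarith
    -- first integral
    have hmeas1 : Measurable fun s : ℝ => min (t ^ ε) (s ^ (-ε)) :=
      measurable_const.min (measurable_id.pow measurable_const)
    constructor
    · rw [integral_wtau htτ hmeas1, ← hn]
      calc (n:ℝ)⁻¹ * ∑ k ∈ Finset.Icc 1 n, min (t ^ ε) (((k:ℝ) * τ / t) ^ (-ε))
          ≤ (n:ℝ)⁻¹ * ∑ k ∈ Finset.Icc 1 n, (2*(n:ℝ)) ^ ε * ((k:ℝ)) ^ (-ε) := by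
            gcongr with k hk
            exact min_rpow_key hε hτ htpos hM0 hM _ (Nat.cast_nonneg k)
        _ = (n:ℝ)⁻¹ * ((2*(n:ℝ)) ^ ε * ∑ k ∈ Finset.Icc 1 n, ((k:ℝ)) ^ (-ε)) := by
            rw [← Finset.mul_sum]
        _ ≤ (n:ℝ)⁻¹ * ((2*(n:ℝ)) ^ ε * (1 * ((n:ℝ) ^ (1-ε) / (1-ε)))) := by
            rw [one_mul]
            gcongr
            exact sum_neg_rpow_le hε n
        _ ≤ 2 * 1 / (1-ε) := final_arith hε hn1 zero_le_one
        _ ≤ 4 / (1-ε) := by gcongr <;> norm_num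
    · -- double integral
      have hinner : ∀ s₁ : ℝ, (∫ s₂, min (t ^ ε) (|s₁ - s₂| ^ (-ε)) ∂(wtau τ t))
          = (n:ℝ)⁻¹ * ∑ j ∈ Finset.Icc 1 n, min (t ^ ε) (|s₁ - (j:ℝ) * τ / t| ^ (-ε)) := by
        intro s₁
        exact integral_wtau htτ
          (measurable_const.min (((measurable_const.sub measurable_id).abs).pow
            measurable_const))
      simp_rw [hinner]
      have hmeas2 : Measurable fun s₁ : ℝ =>
          (n:ℝ)⁻¹ * ∑ j ∈ Finset.Icc 1 n, min (t ^ ε) (|s₁ - (j:ℝ) * τ / t| ^ (-ε)) := by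
        refine measurable_const.mul (Finset.measurable_sum _ fun j _ => ?_)
        exact measurable_const.min (((measurable_id.sub measurable_const).abs).pow
          measurable_const)
      rw [integral_wtau htτ hmeas2, ← hn]
      have habs : ∀ k j : ℕ, |(k:ℝ) * τ / t - (j:ℝ) * τ / t|
          = |(k:ℝ) - (j:ℝ)| * τ / t := by
        intro k j
        rw [show (k:ℝ) * τ / t - (j:ℝ) * τ / t = ((k:ℝ) - (j:ℝ)) * τ / t by ring,
          abs_div, abs_mul, abs_of_pos htpos, abs_of_pos hτ]
      calc (n:ℝ)⁻¹ * ∑ k ∈ Finset.Icc 1 n, ((n:ℝ)⁻¹ *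
            ∑ j ∈ Finset.Icc 1 n, min (t ^ ε) (|(k:ℝ) * τ / t - (j:ℝ) * τ / t| ^ (-ε)))
          ≤ (n:ℝ)⁻¹ * ∑ k ∈ Finset.Icc 1 n, ((n:ℝ)⁻¹ *
            ((2*(n:ℝ)) ^ ε * (2 * ((n:ℝ) ^ (1-ε) / (1-ε))))) := by
            gcongr with k hk
            calc ∑ j ∈ Finset.Icc 1 n, min (t ^ ε) (|(k:ℝ) * τ / t - (j:ℝ) * τ / t| ^ (-ε))
                ≤ ∑ j ∈ Finset.Icc 1 n, (2*(n:ℝ)) ^ ε * (|(k:ℝ) - (j:ℝ)|) ^ (-ε) := by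
                  refine Finset.sum_le_sum fun j hj => ?_
                  rw [habs k j]
                  exact min_rpow_key hε hτ htpos hM0 hM _ (abs_nonneg _)
              _ = (2*(n:ℝ)) ^ ε * ∑ j ∈ Finset.Icc 1 n, (|(k:ℝ) - (j:ℝ)|) ^ (-ε) := by
                  rw [← Finset.mul_sum]
              _ ≤ (2*(n:ℝ)) ^ ε * (2 * ((n:ℝ) ^ (1-ε) / (1-ε))) := by
                  gcongr
                  exact sum_abs_neg_rpow_le hε n k hk
        _ = (n:ℝ)⁻¹ * ((2*(n:ℝ)) ^ ε * (2 * ((n:ℝ) ^ (1-ε) / (1-ε)))) := by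
            rw [Finset.sum_const, Nat.card_Icc]
            simp only [Nat.add_sub_cancel, nsmul_eq_mul]
            rw [show (n:ℝ)⁻¹ * ((n:ℝ) * ((n:ℝ)⁻¹ * ((2*(n:ℝ)) ^ ε *
              (2 * ((n:ℝ) ^ (1-ε) / (1-ε))))))
              = ((n:ℝ)⁻¹ * (n:ℝ)) * ((n:ℝ)⁻¹ * ((2*(n:ℝ)) ^ ε *
              (2 * ((n:ℝ) ^ (1-ε) / (1-ε))))) by ring,
              inv_mul_cancel₀ (ne_of_gt hnpos), one_mul]
        _ ≤ 2 * 2 / (1-ε) := final_arith hε hn1 (by norm_num)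
        _ = 4 / (1-ε) := by norm_num
end

section
/- Let (Y_s)_{s≥0} be a measurable stochastic process in ℝ^d, μ* a probability measure, and f:ℝ^d→ℂ bounded measurable with Riemann-integrable evaluations, such that for some constants A, B > 0 and α, c > 0: |Cov(f(Y_u), f(Y_v))| ≤ A e^{−αc|u−v|} and |E[f(Y_u)] − μ*(f)| ≤ B e^{−αcu} for all u,v ≥ 0. Let w̄_t ∈ 𝒫[0,1] and μ_t = ∫₀¹ δ_{Y_{ts}} w̄_t(ds). Then E[|μ_t(f) − μ*(f)|²] ≤ (A + B²) ∫₀¹∫₀¹ e^{−αct|s₁−s₂|} w̄_t(ds₁) w̄_t(ds₂). -/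
open MeasureTheory ProbabilityTheory Real

private lemma integrable_of_bounded_meas {γ : Type*} [MeasurableSpace γ] (μ : MeasureTheory.Measure γ)
    [IsFiniteMeasure μ] (h : γ → ℂ) (C : ℝ) (hmeas : Measurable h) (hbd : ∀ x, ‖h x‖ ≤ C) :
    Integrable h μ :=
  (integrable_const C).mono' hmeas.aestronglyMeasurable (Filter.Eventually.of_forall hbd)

/-- Second-moment bound for weighted empirical averages: if the covariances of `f` along the
process decay exponentially and the means converge exponentially to `μ*(f)`, then
`E[|μ_t(f) − μ*(f)|²] ≤ (A + B²) ∬ e^{−αct|s₁−s₂|} w̄_t(ds₁) w̄_t(ds₂)`,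
where `μ_t(f) = ∫₀¹ f(Y_{ts}) w̄_t(ds)`. -/
theorem stmt_15 {Ω : Type*} [MeasureSpace Ω] [IsProbabilityMeasure (ℙ : Measure Ω)]
    (d : ℕ) (Y : ℝ → Ω → EuclideanSpace ℝ (Fin d))
    (hY : Measurable (Function.uncurry Y))
    (μstar : Measure (EuclideanSpace ℝ (Fin d))) (hμstar : IsProbabilityMeasure μstar)
    (f : EuclideanSpace ℝ (Fin d) → ℂ) (hfm : Measurable f)
    (M : ℝ) (hfb : ∀ x, ‖f x‖ ≤ M)
    (A B α c : ℝ) (hA : 0 < A) (hB : 0 < B) (hα : 0 < α) (hc : 0 < c)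
    (hcov : ∀ u ≥ (0:ℝ), ∀ v ≥ (0:ℝ),
      ‖(∫ ω, f (Y u ω) * (starRingEnd ℂ) (f (Y v ω)) ∂ℙ) -
          (∫ ω, f (Y u ω) ∂ℙ) * (starRingEnd ℂ) (∫ ω, f (Y v ω) ∂ℙ)‖ ≤
        A * Real.exp (-α * c * |u - v|))
    (hmean : ∀ u ≥ (0:ℝ),
      ‖(∫ ω, f (Y u ω) ∂ℙ) - ∫ x, f x ∂μstar‖ ≤ B * Real.exp (-α * c * u))
    (w : Measure ℝ) (hw : IsProbabilityMeasure w) (hwsupp : w (Set.Icc 0 1)ᶜ = 0)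
    (t : ℝ) (ht : 0 ≤ t) :
    (∫ ω, ‖(∫ s, f (Y (t * s) ω) ∂w) - ∫ x, f x ∂μstar‖ ^ 2 ∂ℙ) ≤
      (A + B ^ 2) * ∫ s₁, ∫ s₂, Real.exp (-α * c * t * |s₁ - s₂|) ∂w ∂w := by
  set m : ℂ := ∫ x, f x ∂μstar with hm
  have hM0 : 0 ≤ M := le_trans (norm_nonneg _) (hfb 0)
  have hmnorm : ‖m‖ ≤ M := by
    calc ‖m‖ ≤ M * (μstar Set.univ).toReal :=
          norm_integral_le_of_norm_le_const (Filter.Eventually.of_forall fun x => hfb x)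
      _ = M := by simp
  set G : ℝ → Ω → ℂ := fun s ω => f (Y (t * s) ω) - m with hG
  -- measurability facts
  have hgmeas : Measurable (fun p : ℝ × Ω => f (Y (t * p.1) p.2)) :=
    hfm.comp (hY.comp ((measurable_fst.const_mul t).prodMk measurable_snd))
  have hGmeas : Measurable (fun p : ℝ × Ω => G p.1 p.2) := hgmeas.sub measurable_const
  have hmeas1 : ∀ ω, Measurable (fun s : ℝ => f (Y (t * s) ω)) := fun ω =>
    hgmeas.comp (measurable_id.prodMk measurable_const)
  have hmeas2 : ∀ s, Measurable (fun ω : Ω => f (Y (t * s) ω)) := fun s =>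
    hgmeas.comp (measurable_const.prodMk measurable_id)
  have hGmeas₁ : ∀ ω, Measurable (fun s => G s ω) := fun ω =>
    hGmeas.comp (measurable_id.prodMk measurable_const)
  have hGmeas₂ : ∀ s, Measurable (fun ω => G s ω) := fun s =>
    hGmeas.comp (measurable_const.prodMk measurable_id)
  have hGbound : ∀ s ω, ‖G s ω‖ ≤ 2 * M := fun s ω => by
    calc ‖f (Y (t * s) ω) - m‖ ≤ ‖f (Y (t * s) ω)‖ + ‖m‖ := norm_sub_le _ _
      _ ≤ M + M := add_le_add (hfb _) hmnorm
      _ = 2 * M := by ring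
  set ν : Measure (ℝ × ℝ) := w.prod w with hν
  have hνprob : IsProbabilityMeasure ν := by infer_instance
  set K : ℝ × ℝ → Ω → ℂ := fun p ω => G p.1 ω * (starRingEnd ℂ) (G p.2 ω) with hKdef
  have hKmeas : Measurable (fun z : (ℝ × ℝ) × Ω => K z.1 z.2) := by
    apply Measurable.mul
    · exact hGmeas.comp ((measurable_fst.fst).prodMk measurable_snd)
    · exact (Complex.continuous_conj.measurable).comp
        (hGmeas.comp ((measurable_fst.snd).prodMk measurable_snd))
  have hKbound : ∀ p ω, ‖K p ω‖ ≤ (2 * M) * (2 * M) := fun p ω => by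
    rw [hKdef, norm_mul, RCLike.norm_conj]
    exact mul_le_mul (hGbound _ _) (hGbound _ _) (norm_nonneg _) (by linarith)
  -- Step A+B: pointwise identity in ω
  have key1 : ∀ ω, ‖(∫ s, f (Y (t * s) ω) ∂w) - m‖ ^ 2 = (∫ p, K p ω ∂ν).re := by
    intro ω
    have hint : Integrable (fun s => f (Y (t * s) ω)) w :=
      integrable_of_bounded_meas w (fun s => f (Y (t * s) ω)) M (hmeas1 ω) (fun s => hfb (Y (t * s) ω))
    have hA1 : (∫ s, f (Y (t * s) ω) ∂w) - m = ∫ s, G s ω ∂w := by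
      rw [hG]
      rw [integral_sub hint (integrable_const m), integral_const]
      simp
    rw [hA1]
    set I : ℂ := ∫ s, G s ω ∂w with hI
    have h1 : ‖I‖ ^ 2 = (I * (starRingEnd ℂ) I).re := by
      rw [Complex.mul_conj, Complex.ofReal_re, Complex.normSq_eq_norm_sq]
    rw [h1]
    congr 1
    have h2 : (starRingEnd ℂ) I = ∫ s, (starRingEnd ℂ) (G s ω) ∂w := (integral_conj).symm
    rw [h2, hI]
    rw [← integral_mul_const]
    have h3 : ∀ s₁, G s₁ ω * ∫ s₂, (starRingEnd ℂ) (G s₂ ω) ∂w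
        = ∫ s₂, G s₁ ω * (starRingEnd ℂ) (G s₂ ω) ∂w := fun s₁ => (integral_const_mul _ _).symm
    rw [integral_congr_ae (Filter.Eventually.of_forall h3)]
    simp only [hKdef, hν]
    have hKint : Integrable (fun p : ℝ × ℝ => K p ω) ν := by
      apply integrable_of_bounded_meas ν _ ((2*M)*(2*M))
      · exact hKmeas.comp (measurable_id.prodMk measurable_const)
      · exact fun p => hKbound p ω
    exact integral_integral (f := fun s₁ s₂ => G s₁ ω * (starRingEnd ℂ) (G s₂ ω)) hKint
  -- Step C: integrate over ω and swap
  have hFmeas : StronglyMeasurable (fun ω => ∫ p, K p ω ∂ν) := by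
    apply StronglyMeasurable.integral_prod_right' (f := fun z : Ω × (ℝ × ℝ) => K z.2 z.1)
    exact (hKmeas.comp (measurable_snd.prodMk measurable_fst)).stronglyMeasurable
  have hFint : Integrable (fun ω => ∫ p, K p ω ∂ν) ℙ := by
    refine (integrable_const ((2*M)*(2*M))).mono' hFmeas.aestronglyMeasurable
      (Filter.Eventually.of_forall fun ω => ?_)
    calc ‖∫ p, K p ω ∂ν‖ ≤ ((2*M)*(2*M)) * (ν Set.univ).toReal :=
          norm_integral_le_of_norm_le_const (Filter.Eventually.of_forall fun p => hKbound p ω)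
      _ = (2*M)*(2*M) := by simp
  have step1 : (∫ ω, ‖(∫ s, f (Y (t * s) ω) ∂w) - m‖ ^ 2 ∂ℙ)
      = (∫ ω, ∫ p, K p ω ∂ν ∂ℙ).re := by
    have h := integral_re (μ := (ℙ : Measure Ω)) hFint
    simp only [RCLike.re_to_complex] at h
    rw [← h]
    exact integral_congr_ae (Filter.Eventually.of_forall key1)
  have hswap : ∫ ω, ∫ p, K p ω ∂ν ∂ℙ = ∫ p, ∫ ω, K p ω ∂ℙ ∂ν := by
    apply integral_integral_swap (f := fun ω p => K p ω)
    apply integrable_of_bounded_meas ((ℙ : Measure Ω).prod ν) _ ((2*M)*(2*M))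
    · exact hKmeas.comp (measurable_snd.prodMk measurable_fst)
    · exact fun z => hKbound z.2 z.1
  -- a.e. positivity of coordinates
  have hae : ∀ᵐ p ∂ν, 0 ≤ p.1 ∧ 0 ≤ p.2 := by
    have h0 : w {s : ℝ | ¬ 0 ≤ s} = 0 := by
      apply measure_mono_null _ hwsupp
      intro s hs
      simp only [Set.mem_setOf_eq, not_le] at hs
      simp [Set.mem_Icc]
      intro h; linarith
    rw [Filter.eventually_and]
    constructor
    · rw [MeasureTheory.ae_iff]
      have : {p : ℝ × ℝ | ¬ 0 ≤ p.1} = {s : ℝ | ¬ 0 ≤ s} ×ˢ Set.univ := by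
        ext p; simp
      rw [this, hν, Measure.prod_prod, h0, zero_mul]
    · rw [MeasureTheory.ae_iff]
      have : {p : ℝ × ℝ | ¬ 0 ≤ p.2} = Set.univ ×ˢ {s : ℝ | ¬ 0 ≤ s} := by
        ext p; simp
      rw [this, hν, Measure.prod_prod, h0, mul_zero]
  -- pointwise bound on the ω-integral
  have hbnd : ∀ᵐ p ∂ν, ‖∫ ω, K p ω ∂ℙ‖ ≤ (A + B ^ 2) * Real.exp (-α * c * t * |p.1 - p.2|) := by
    filter_upwards [hae] with p hp
    obtain ⟨hs₁, hs₂⟩ := hp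
    set s₁ := p.1; set s₂ := p.2
    have hu : (0:ℝ) ≤ t * s₁ := mul_nonneg ht hs₁
    have hv : (0:ℝ) ≤ t * s₂ := mul_nonneg ht hs₂
    have hint1 : Integrable (fun ω => f (Y (t * s₁) ω)) ℙ :=
      integrable_of_bounded_meas ℙ _ M (hmeas2 _) (fun ω => hfb _)
    have hint2 : Integrable (fun ω => f (Y (t * s₂) ω)) ℙ :=
      integrable_of_bounded_meas ℙ _ M (hmeas2 _) (fun ω => hfb _)
    have hint2c : Integrable (fun ω => (starRingEnd ℂ) (f (Y (t * s₂) ω))) ℙ :=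
      integrable_of_bounded_meas ℙ _ M ((Complex.continuous_conj.measurable).comp (hmeas2 s₂))
        (fun ω => by rw [RCLike.norm_conj]; exact hfb _)
    have hint12 : Integrable (fun ω => f (Y (t * s₁) ω) * (starRingEnd ℂ) (f (Y (t * s₂) ω))) ℙ := by
      apply integrable_of_bounded_meas ℙ _ (M * M)
      · exact (hmeas2 s₁).mul ((Complex.continuous_conj.measurable).comp (hmeas2 s₂))
      · intro ω
        rw [norm_mul, RCLike.norm_conj]
        exact mul_le_mul (hfb _) (hfb _) (norm_nonneg _) hM0
    -- expand the integrand
    have hexp : ∫ ω, K p ω ∂ℙ =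
        ((∫ ω, f (Y (t * s₁) ω) * (starRingEnd ℂ) (f (Y (t * s₂) ω)) ∂ℙ)
          - (∫ ω, f (Y (t * s₁) ω) ∂ℙ) * (starRingEnd ℂ) (∫ ω, f (Y (t * s₂) ω) ∂ℙ))
        + ((∫ ω, f (Y (t * s₁) ω) ∂ℙ) - m) * (starRingEnd ℂ) ((∫ ω, f (Y (t * s₂) ω) ∂ℙ) - m) := by
      have e1 : ∀ ω, K p ω = f (Y (t * s₁) ω) * (starRingEnd ℂ) (f (Y (t * s₂) ω))
          - f (Y (t * s₁) ω) * (starRingEnd ℂ) m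
          - m * (starRingEnd ℂ) (f (Y (t * s₂) ω)) + m * (starRingEnd ℂ) m := by
        intro ω
        simp only [hKdef, hG, map_sub]
        ring
      rw [integral_congr_ae (Filter.Eventually.of_forall e1)]
      have hI2 : Integrable (fun ω => f (Y (t * s₁) ω) * (starRingEnd ℂ) m) ℙ :=
        hint1.mul_const _
      have hI3 : Integrable (fun ω => m * (starRingEnd ℂ) (f (Y (t * s₂) ω))) ℙ :=
        hint2c.const_mul m
      have hI12 : Integrable (fun ω => f (Y (t * s₁) ω) * (starRingEnd ℂ) (f (Y (t * s₂) ω))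
          - f (Y (t * s₁) ω) * (starRingEnd ℂ) m) ℙ := hint12.sub hI2
      have hI123 : Integrable (fun ω => f (Y (t * s₁) ω) * (starRingEnd ℂ) (f (Y (t * s₂) ω))
          - f (Y (t * s₁) ω) * (starRingEnd ℂ) m
          - m * (starRingEnd ℂ) (f (Y (t * s₂) ω))) ℙ := hI12.sub hI3
      rw [integral_add hI123 (integrable_const _),
        integral_sub hI12 hI3,
        integral_sub hint12 hI2,
        integral_mul_const, integral_const_mul, integral_conj, integral_const]
      have : (ℙ : Measure Ω) Set.univ = 1 := measure_univ
      simp only [this, probReal_univ, ENNReal.toReal_one, one_smul, map_sub]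
      ring
    rw [hexp]
    have hC := hcov (t * s₁) hu (t * s₂) hv
    have hm1 := hmean (t * s₁) hu
    have hm2 := hmean (t * s₂) hv
    have habs : |t * s₁ - t * s₂| = t * |s₁ - s₂| := by
      rw [← mul_sub, abs_mul, abs_of_nonneg ht]
    calc ‖_ + _‖ ≤ ‖(∫ ω, f (Y (t * s₁) ω) * (starRingEnd ℂ) (f (Y (t * s₂) ω)) ∂ℙ)
          - (∫ ω, f (Y (t * s₁) ω) ∂ℙ) * (starRingEnd ℂ) (∫ ω, f (Y (t * s₂) ω) ∂ℙ)‖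
          + ‖((∫ ω, f (Y (t * s₁) ω) ∂ℙ) - m) * (starRingEnd ℂ) ((∫ ω, f (Y (t * s₂) ω) ∂ℙ) - m)‖ :=
        norm_add_le _ _
      _ ≤ A * Real.exp (-α * c * |t * s₁ - t * s₂|)
          + (B * Real.exp (-α * c * (t * s₁))) * (B * Real.exp (-α * c * (t * s₂))) := by
        apply add_le_add hC
        rw [norm_mul, RCLike.norm_conj]
        exact mul_le_mul hm1 hm2 (norm_nonneg _) (by positivity)
      _ ≤ A * Real.exp (-α * c * t * |s₁ - s₂|) + B ^ 2 * Real.exp (-α * c * t * |s₁ - s₂|) := by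
        apply add_le_add
        · rw [habs, mul_assoc (-α * c)]
        · have h1 : -α * c * (t * s₁) + -α * c * (t * s₂) ≤ -α * c * t * |s₁ - s₂| := by
            have h2 : |s₁ - s₂| ≤ s₁ + s₂ := by
              rw [abs_sub_le_iff]; constructor <;> linarith
            nlinarith [mul_pos hα hc, mul_nonneg (mul_pos hα hc).le ht]
          calc B * Real.exp (-α * c * (t * s₁)) * (B * Real.exp (-α * c * (t * s₂)))
              = B ^ 2 * Real.exp (-α * c * (t * s₁) + -α * c * (t * s₂)) := by
                rw [Real.exp_add]; ring
            _ ≤ B ^ 2 * Real.exp (-α * c * t * |s₁ - s₂|) := by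
                apply mul_le_mul_of_nonneg_left (Real.exp_le_exp.mpr h1) (by positivity)
      _ = (A + B ^ 2) * Real.exp (-α * c * t * |s₁ - s₂|) := by ring
  -- the bound is integrable
  have hEint : Integrable (fun p : ℝ × ℝ => Real.exp (-α * c * t * |p.1 - p.2|)) ν := by
    refine (integrable_const (1:ℝ)).mono' ?_ (Filter.Eventually.of_forall fun p => ?_)
    · exact (Real.continuous_exp.comp
        ((continuous_const.mul ((continuous_fst.sub continuous_snd).abs)))).aestronglyMeasurable
    · rw [Real.norm_eq_abs, abs_of_nonneg (Real.exp_pos _).le]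
      apply Real.exp_le_one_iff.mpr
      have : (0:ℝ) ≤ α * c * t * |p.1 - p.2| := by positivity
      linarith
  -- conclude
  calc (∫ ω, ‖(∫ s, f (Y (t * s) ω) ∂w) - m‖ ^ 2 ∂ℙ)
      = (∫ p, ∫ ω, K p ω ∂ℙ ∂ν).re := by rw [step1, hswap]
    _ ≤ ‖∫ p, ∫ ω, K p ω ∂ℙ ∂ν‖ := Complex.re_le_norm _
    _ ≤ ∫ p, ‖∫ ω, K p ω ∂ℙ‖ ∂ν := norm_integral_le_integral_norm _
    _ ≤ ∫ p, (A + B ^ 2) * Real.exp (-α * c * t * |p.1 - p.2|) ∂ν := by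
        apply integral_mono_of_nonneg (Filter.Eventually.of_forall fun p => norm_nonneg _)
          (hEint.const_mul _) hbnd
    _ = (A + B ^ 2) * ∫ p : ℝ × ℝ, Real.exp (-α * c * t * |p.1 - p.2|) ∂ν := by
        rw [integral_const_mul]
    _ = (A + B ^ 2) * ∫ s₁, ∫ s₂, Real.exp (-α * c * t * |s₁ - s₂|) ∂w ∂w := by
        rw [integral_prod _ hEint]
end
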